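/- Let r be a solution of the log-variable integral equation on an interval 𝓘 containing t_0, with initial datum (t_0, ν_0) where ν_0 has finite first moment in the r-variable. Then there exists a constant R̄ > 0, independent of t and r_0, such that for all t ∈ 𝓘 with t ≥ t_0, ∫ |r(t, r_0, θ)| dν_0(r_0, θ) ≤ ( ∫ |r_0| dν_0^r(r_0) + R̄ )·e^{2γ_M (t − t_0)} − R̄. -/

import Mathlib

open MeasureTheory Set
open scoped ENNReal

/-- The individual-parameter space `ℝ² × ℝ × ℝ`, with elements `θ = (x, S, γ)`. -/
abbrev Param : Type := EuclideanSpace ℝ (Fin 2) × ℝ × ℝ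

/-- The admissible parameter set `Θ = ℝ² × [s_m, s_m e^{R_M}] × [0, γ_M]`. -/
def ΘSet (sm RM γM : ℝ) : Set Param :=
  {p : Param | sm ≤ p.2.1 ∧ p.2.1 ≤ sm * Real.exp RM ∧ 0 ≤ p.2.2 ∧ p.2.2 ≤ γM}

/-- The log-variable competition kernel
`C_r(r, r', d) = r' / (2 R_M (1 + d²/σ_x²)) · (1 + tanh((r' − r)/σ_r))`. -/
noncomputable def potR (RM σx σr r r' d : ℝ) : ℝ :=
  r' / (2 * RM * (1 + d ^ 2 / σx ^ 2)) * (1 + Real.tanh ((r' - r) / σr))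

/-- The nonlocal competition term
`𝒞_r(ρ, t, r_0, θ) = ∫ C_r(ρ(t,r_0,θ), ρ(t,r_0',θ'), |x−x'|) dν_0(r_0',θ')`. -/
noncomputable def compR (RM σx σr : ℝ) (ν0 : Measure (ℝ × Param))
    (ρ : ℝ → ℝ → Param → ℝ) (t r0 : ℝ) (θ : Param) : ℝ :=
  ∫ z, potR RM σx σr (ρ t r0 θ) (ρ t z.1 z.2) (dist θ.1 z.2.1) ∂ν0

/-- `r` is a solution of the log-variable integral equation on the interval `I ∋ t0` with
initial datum `(t0, ν0)`: it is continuous in time and satisfies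
`r(t,r_0,θ) = r_0 + γ ∫_{t_0}^t ( log(S/s_m)(1 − 𝒞_r(r,τ,r_0,θ)) − r(τ,r_0,θ) ) dτ`. -/
def IsLogSolOn (sm RM σx σr γM : ℝ) (ν0 : Measure (ℝ × Param)) (t0 : ℝ)
    (I : Set ℝ) (r : ℝ → ℝ → Param → ℝ) : Prop :=
  t0 ∈ I ∧ I.OrdConnected ∧
  (∀ (r0 : ℝ) (θ : Param), ContinuousOn (fun t => r t r0 θ) I) ∧
  ∀ t ∈ I, ∀ r0 : ℝ, ∀ θ ∈ ΘSet sm RM γM,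
    r t r0 θ = r0 + θ.2.2 * ∫ τ in t0..t,
      (Real.log (θ.2.1 / sm) * (1 - compR RM σx σr ν0 r τ r0 θ) - r τ r0 θ)

/-! The solution obeys two maximum principles. Where `r ≥ 0` the competition term is at least
`-σ_r/(2 e R_M)`, so the drift is nonpositive above `V = R_M + σ_r/(2e)` and `r ≤ max r₀ V`.
Integrated against `ν₀`, this bounds `𝒞_r` above by `(M + V)/R_M`, `M` the first moment of `ν₀ʳ`,
which makes the drift nonnegative below `-(M + V)`; hence `|r| ≤ |r₀| + M + V`. Then `𝒞_r` and
the drift are bounded, `|r(t) - r₀|` grows at most linearly in `t - t₀`, and `1 + x ≤ eˣ`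
followed by integration over `ν₀` gives the claim. -/

open Real

theorem one_add_tanh_nonneg (x : ℝ) : 0 ≤ 1 + tanh x := by
  linarith [neg_one_lt_tanh x]

theorem one_add_tanh_le_two (x : ℝ) : 1 + tanh x ≤ 2 := by
  linarith [tanh_lt_one x]

theorem one_add_tanh_le_two_mul_exp (x : ℝ) : 1 + tanh x ≤ 2 * exp (2 * x) := by
  have h : 1 + tanh x = 2 * exp x / (exp x + exp (-x)) := by
    rw [tanh_eq]; field_simp; ring
  have hexp : exp (2 * x) * exp (-x) = exp x := by rw [← exp_add]; ring_nf
  rw [h, div_le_iff₀ (by positivity)]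
  nlinarith [exp_pos (2 * x), exp_pos x]

/-- The minimum of `b ↦ 2 b e^{2b/σ}` is `-σ/e`, attained at `b = -σ/2`. -/
theorem neg_mul_exp_neg_one_le_mul_one_add_tanh {σ a : ℝ} (hσ : 0 < σ) (ha : 0 ≤ a) (b : ℝ) :
    -(σ * exp (-1)) ≤ b * (1 + tanh ((b - a) / σ)) := by
  rcases le_or_gt 0 b with hb | hb
  · linarith [mul_nonneg hb (one_add_tanh_nonneg ((b - a) / σ)), mul_pos hσ (exp_pos (-1))]
  have hmono : exp (2 * ((b - a) / σ)) ≤ exp (2 * b / σ) :=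
    exp_le_exp.2 (by rw [mul_div_assoc']; gcongr; linarith)
  have hmin : -(σ * exp (-1)) ≤ 2 * b * exp (2 * b / σ) := by
    have h := mul_exp_neg_le_exp_neg_one (-(2 * b / σ))
    rw [neg_neg] at h
    calc -(σ * exp (-1)) = -σ * exp (-1) := (neg_mul σ _).symm
      _ ≤ -σ * (-(2 * b / σ) * exp (2 * b / σ)) := mul_le_mul_of_nonpos_left h (by linarith)
      _ = 2 * b * exp (2 * b / σ) := by field_simp
  calc -(σ * exp (-1)) ≤ 2 * b * exp (2 * b / σ) := hmin
    _ ≤ b * (2 * exp (2 * ((b - a) / σ))) := by nlinarith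
    _ ≤ b * (1 + tanh ((b - a) / σ)) :=
        mul_le_mul_of_nonpos_left (one_add_tanh_le_two_mul_exp _) hb.le

section Kernel

variable {RM σx σr : ℝ}

theorem potR_eq (a b d : ℝ) :
    potR RM σx σr a b d = b * (1 + tanh ((b - a) / σr)) / (2 * RM * (1 + d ^ 2 / σx ^ 2)) :=
  div_mul_eq_mul_div _ _ _

theorem two_mul_le_potR_denom (hRM : 0 < RM) (d : ℝ) : 2 * RM ≤ 2 * RM * (1 + d ^ 2 / σx ^ 2) :=
  le_mul_of_one_le_right (by positivity) (le_add_of_nonneg_right (by positivity))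

theorem potR_le_max_div (hRM : 0 < RM) (a b d : ℝ) : potR RM σx σr a b d ≤ max b 0 / RM := by
  have hT0 := one_add_tanh_nonneg ((b - a) / σr)
  calc potR RM σx σr a b d ≤ max b 0 * 2 / (2 * RM * (1 + d ^ 2 / σx ^ 2)) := by
        rw [potR_eq]
        gcongr ?_ / _
        calc b * (1 + tanh ((b - a) / σr)) ≤ max b 0 * (1 + tanh ((b - a) / σr)) := by
              gcongr; exact le_max_left _ _
          _ ≤ max b 0 * 2 := by gcongr; exact one_add_tanh_le_two _
    _ ≤ max b 0 * 2 / (2 * RM) := by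
        gcongr max b 0 * 2 / ?_
        exact two_mul_le_potR_denom hRM d
    _ = max b 0 / RM := by field_simp

theorem abs_potR_le (hRM : 0 < RM) (a b d : ℝ) : |potR RM σx σr a b d| ≤ |b| / RM := by
  have hD := two_mul_le_potR_denom (σx := σx) hRM d
  calc |potR RM σx σr a b d|
        = |b| * (1 + tanh ((b - a) / σr)) / (2 * RM * (1 + d ^ 2 / σx ^ 2)) := by
        rw [potR_eq, abs_div, abs_mul, abs_of_nonneg (one_add_tanh_nonneg _),
          abs_of_pos (show 0 < 2 * RM * (1 + d ^ 2 / σx ^ 2) by linarith)]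
    _ ≤ |b| * 2 / (2 * RM) := by gcongr; exact one_add_tanh_le_two _
    _ = |b| / RM := by field_simp

theorem neg_le_potR (hRM : 0 < RM) (hσr : 0 < σr) {a : ℝ} (ha : 0 ≤ a) (b d : ℝ) :
    -(σr * exp (-1) / (2 * RM)) ≤ potR RM σx σr a b d := by
  have hD := two_mul_le_potR_denom (σx := σx) hRM d
  calc -(σr * exp (-1) / (2 * RM)) ≤ -(σr * exp (-1) / (2 * RM * (1 + d ^ 2 / σx ^ 2))) := by
        gcongr
    _ ≤ potR RM σx σr a b d := by
        rw [potR_eq, ← neg_div]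
        gcongr
        exact neg_mul_exp_neg_one_le_mul_one_add_tanh hσr ha b

end Kernel

theorem integral_le_integral_of_ae_le_of_nonneg {α : Type*} [MeasurableSpace α] {μ : Measure α}
    {f g : α → ℝ} (hg : Integrable g μ) (hg0 : 0 ≤ᵐ[μ] g) (hfg : f ≤ᵐ[μ] g) :
    ∫ x, f x ∂μ ≤ ∫ x, g x ∂μ := by
  by_cases hf : Integrable f μ
  · exact integral_mono_ae hf hg hfg
  · rw [integral_undef hf]
    exact integral_nonneg_of_ae hg0

section CompetitionTerm

variable {RM σx σr : ℝ} {ν0 : Measure (ℝ × Param)} {ρ : ℝ → ℝ → Param → ℝ} {t r0 : ℝ} {θ : Param}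

theorem neg_le_compR [IsProbabilityMeasure ν0] (hRM : 0 < RM) (hσr : 0 < σr)
    (hρ : 0 ≤ ρ t r0 θ) : -(σr * exp (-1) / (2 * RM)) ≤ compR RM σx σr ν0 ρ t r0 θ := by
  have h := integral_le_integral_of_ae_le_of_nonneg (μ := ν0)
    (f := fun z ↦ -potR RM σx σr (ρ t r0 θ) (ρ t z.1 z.2) (dist θ.1 z.2.1))
    (integrable_const (σr * exp (-1) / (2 * RM))) (ae_of_all _ fun _ ↦ by positivity)
    (ae_of_all _ fun _ ↦ neg_le.1 (neg_le_potR hRM hσr hρ _ _))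
  rw [integral_neg, integral_const, probReal_univ, one_smul] at h
  exact neg_le.2 h

theorem compR_le_integral_div (hRM : 0 < RM) {φ : ℝ × Param → ℝ} (hφ : Integrable φ ν0)
    (hρφ : ∀ᵐ z ∂ν0, max (ρ t z.1 z.2) 0 ≤ φ z) :
    compR RM σx σr ν0 ρ t r0 θ ≤ (∫ z, φ z ∂ν0) / RM := by
  rw [← integral_div]
  refine integral_le_integral_of_ae_le_of_nonneg (hφ.div_const RM) ?_ ?_
  · filter_upwards [hρφ] with z hz
    exact div_nonneg ((le_max_right _ _).trans hz) hRM.le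
  · filter_upwards [hρφ] with z hz
    exact (potR_le_max_div hRM _ _ _).trans (div_le_div_of_nonneg_right hz hRM.le)

theorem abs_compR_le_integral_div (hRM : 0 < RM) {φ : ℝ × Param → ℝ} (hφ : Integrable φ ν0)
    (hρφ : ∀ᵐ z ∂ν0, |ρ t z.1 z.2| ≤ φ z) :
    |compR RM σx σr ν0 ρ t r0 θ| ≤ (∫ z, φ z ∂ν0) / RM := by
  rw [← integral_div]
  refine norm_integral_le_of_norm_le (f := fun z ↦ potR RM σx σr (ρ t r0 θ) (ρ t z.1 z.2)
    (dist θ.1 z.2.1)) (hφ.div_const RM) ?_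
  filter_upwards [hρφ] with z hz
  exact (abs_potR_le hRM _ _ _).trans (div_le_div_of_nonneg_right hz hRM.le)

end CompetitionTerm

/-- On the last stretch `(s, b]` where `u > max c V`, `g ≤ 0`, so `u` can only decrease there. -/
theorem le_max_of_eq_add_integral {u g : ℝ → ℝ} {a b c V γ : ℝ} (hab : a ≤ b) (hγ : 0 ≤ γ)
    (hu : ContinuousOn u (Icc a b)) (hug : ∀ t ∈ Icc a b, u t = c + γ * ∫ τ in a..t, g τ)
    (hg : ∀ τ ∈ Icc a b, V < u τ → g τ ≤ 0) :
    u b ≤ max c V := by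
  have hb : b ∈ Icc a b := right_mem_Icc.2 hab
  by_cases hgi : IntervalIntegrable g volume a b
  swap
  · rw [hug b hb, intervalIntegral.integral_undef hgi, mul_zero, add_zero]
    exact le_max_left c V
  by_contra! hub
  set C := Icc a b ∩ u ⁻¹' Iic (max c V)
  have haC : a ∈ C := ⟨left_mem_Icc.2 hab, by simp [hug a (left_mem_Icc.2 hab)]⟩
  obtain ⟨s, hsC, hs_max⟩ : ∃ s, IsGreatest C s :=
    (isCompact_Icc.of_isClosed_subset (hu.preimage_isClosed_of_isClosed isClosed_Icc isClosed_Iic)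
      inter_subset_left).exists_isGreatest ⟨a, haC⟩
  have hsb : s < b := hsC.1.2.lt_of_ne (by rintro rfl; exact hub.not_ge hsC.2)
  have hg_nonpos : ∀ τ ∈ Ioc s b, g τ ≤ 0 := fun τ hτ ↦
    have hτ' : τ ∈ Icc a b := ⟨hsC.1.1.trans hτ.1.le, hτ.2⟩
    hg τ hτ' ((le_max_right c V).trans_lt (not_le.1 fun h ↦ hτ.1.not_ge (hs_max ⟨hτ', h⟩)))
  have hint_nonpos : ∫ τ in s..b, g τ ≤ 0 := by
    rw [intervalIntegral.integral_of_le hsb.le]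
    exact setIntegral_nonpos measurableSet_Ioc hg_nonpos
  have hsplit : u b = u s + γ * ∫ τ in s..b, g τ := by
    rw [hug b hb, hug s hsC.1, ← intervalIntegral.integral_add_adjacent_intervals
      (hgi.mono_set (uIcc_subset_uIcc_left (Icc_subset_uIcc hsC.1)))
      (hgi.mono_set (uIcc_subset_uIcc_right (Icc_subset_uIcc hsC.1)))]
    ring
  have hus : u s ≤ max c V := hsC.2
  linarith [mul_nonpos_of_nonneg_of_nonpos hγ hint_nonpos]

theorem log_div_mem_Icc_of_mem_ΘSet {sm RM γM : ℝ} (hsm : 0 < sm) {θ : Param}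
    (hθ : θ ∈ ΘSet sm RM γM) : Real.log (θ.2.1 / sm) ∈ Icc 0 RM := by
  obtain ⟨hsS, hSe, -, -⟩ := hθ
  refine ⟨Real.log_nonneg ((one_le_div hsm).2 hsS), ?_⟩
  rw [Real.log_le_iff_le_exp (div_pos (hsm.trans_le hsS) hsm), div_le_iff₀ hsm, mul_comm]
  exact hSe

noncomputable def logDrift (sm RM σx σr : ℝ) (ν0 : Measure (ℝ × Param))
    (ρ : ℝ → ℝ → Param → ℝ) (t r0 : ℝ) (θ : Param) : ℝ :=
  Real.log (θ.2.1 / sm) * (1 - compR RM σx σr ν0 ρ t r0 θ) - ρ t r0 θ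

/-- Above this level the drift is nonpositive, since `𝒞_r ≥ -σ_r/(2 e R_M)` where `r ≥ 0`. -/
noncomputable def upperBarrier (RM σr : ℝ) : ℝ := RM + σr * exp (-1) / 2

theorem upperBarrier_pos {RM σr : ℝ} (hRM : 0 < RM) (hσr : 0 < σr) : 0 < upperBarrier RM σr := by
  unfold upperBarrier; positivity

/-- The constant `R̄` of the statement, `M` standing for the first moment of `ν₀ʳ`. -/
noncomputable def driftBound (RM σr M : ℝ) : ℝ := RM + 3 * M + 2 * upperBarrier RM σr

theorem driftBound_pos {RM σr M : ℝ} (hRM : 0 < RM) (hσr : 0 < σr) (hM : 0 ≤ M) :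
    0 < driftBound RM σr M := by
  have := upperBarrier_pos hRM hσr
  unfold driftBound; positivity

namespace IsLogSolOn

variable {sm RM σx σr γM t0 : ℝ} {ν0 : Measure (ℝ × Param)} {I : Set ℝ}
  {r : ℝ → ℝ → Param → ℝ} {t r0 : ℝ} {θ : Param}

theorem Icc_subset (hr : IsLogSolOn sm RM σx σr γM ν0 t0 I r) (ht : t ∈ I) : Icc t0 t ⊆ I :=
  hr.2.1.out hr.1 ht

theorem eq_add_integral_logDrift (hr : IsLogSolOn sm RM σx σr γM ν0 t0 I r) (ht : t ∈ I)
    (hθ : θ ∈ ΘSet sm RM γM) :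
    r t r0 θ = r0 + θ.2.2 * ∫ τ in t0..t, logDrift sm RM σx σr ν0 r τ r0 θ :=
  hr.2.2.2 t ht r0 θ hθ

theorem le_max_of_logDrift_nonpos (hr : IsLogSolOn sm RM σx σr γM ν0 t0 I r)
    (hθ : θ ∈ ΘSet sm RM γM) (ht : t ∈ I) (htt : t0 ≤ t) {V : ℝ}
    (hV : ∀ τ ∈ Icc t0 t, V < r τ r0 θ → logDrift sm RM σx σr ν0 r τ r0 θ ≤ 0) :
    r t r0 θ ≤ max r0 V :=
  le_max_of_eq_add_integral htt hθ.2.2.1 ((hr.2.2.1 r0 θ).mono (hr.Icc_subset ht))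
    (fun _ hτ ↦ hr.eq_add_integral_logDrift (hr.Icc_subset ht hτ) hθ) hV

theorem neg_le_max_of_logDrift_nonneg (hr : IsLogSolOn sm RM σx σr γM ν0 t0 I r)
    (hθ : θ ∈ ΘSet sm RM γM) (ht : t ∈ I) (htt : t0 ≤ t) {V : ℝ}
    (hV : ∀ τ ∈ Icc t0 t, V < -r τ r0 θ → 0 ≤ logDrift sm RM σx σr ν0 r τ r0 θ) :
    -r t r0 θ ≤ max (-r0) V :=
  le_max_of_eq_add_integral (u := fun τ ↦ -r τ r0 θ)
    (g := fun τ ↦ -logDrift sm RM σx σr ν0 r τ r0 θ) htt hθ.2.2.1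
    ((hr.2.2.1 r0 θ).mono (hr.Icc_subset ht)).neg
    (fun _ hτ ↦ by
      rw [hr.eq_add_integral_logDrift (hr.Icc_subset ht hτ) hθ, intervalIntegral.integral_neg]
      ring)
    (fun τ hτ h ↦ neg_nonpos.2 (hV τ hτ h))

theorem le_max_upperBarrier (hsm : 0 < sm) (hRM : 0 < RM) (hσr : 0 < σr)
    [IsProbabilityMeasure ν0] (hr : IsLogSolOn sm RM σx σr γM ν0 t0 I r)
    (hθ : θ ∈ ΘSet sm RM γM) (ht : t ∈ I) (htt : t0 ≤ t) :
    r t r0 θ ≤ max r0 (upperBarrier RM σr) := by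
  refine hr.le_max_of_logDrift_nonpos hθ ht htt fun τ _ hτ ↦ ?_
  obtain ⟨hL0, hLRM⟩ := log_div_mem_Icc_of_mem_ΘSet hsm hθ
  have hV0 := upperBarrier_pos hRM hσr
  have hC := neg_le_compR (σx := σx) (ν0 := ν0) hRM hσr (hV0.trans hτ).le
  have hLC : Real.log (θ.2.1 / sm) * (1 - compR RM σx σr ν0 r τ r0 θ)
      ≤ RM * (1 + σr * exp (-1) / (2 * RM)) :=
    calc _ ≤ Real.log (θ.2.1 / sm) * (1 + σr * exp (-1) / (2 * RM)) := by gcongr; linarith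
      _ ≤ RM * (1 + σr * exp (-1) / (2 * RM)) := by gcongr
  have hV : RM * (1 + σr * exp (-1) / (2 * RM)) = upperBarrier RM σr := by
    unfold upperBarrier; field_simp
  unfold logDrift
  linarith

theorem compR_le (hsm : 0 < sm) (hRM : 0 < RM) (hσr : 0 < σr) [IsProbabilityMeasure ν0]
    (hsupp : ∀ᵐ z ∂ν0, z.2 ∈ ΘSet sm RM γM) (hmom : Integrable (fun z : ℝ × Param ↦ |z.1|) ν0)
    (hr : IsLogSolOn sm RM σx σr γM ν0 t0 I r) (ht : t ∈ I) (htt : t0 ≤ t) (r0 : ℝ) (θ : Param) :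
    compR RM σx σr ν0 r t r0 θ ≤ ((∫ z, |z.1| ∂ν0) + upperBarrier RM σr) / RM := by
  have hV0 := upperBarrier_pos hRM hσr
  have h := compR_le_integral_div (σx := σx) (σr := σr) (t := t) (r0 := r0) (θ := θ) (ρ := r)
    (φ := fun z ↦ |z.1| + upperBarrier RM σr) hRM (hmom.add (integrable_const _)) (by
      filter_upwards [hsupp] with z hz
      have hz1 := abs_nonneg z.1
      refine max_le ((hr.le_max_upperBarrier hsm hRM hσr hz ht htt).trans (max_le ?_ ?_)) ?_ <;>
        linarith [le_abs_self z.1])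
  rwa [integral_add hmom (integrable_const _), integral_const, probReal_univ, one_smul] at h

theorem neg_le_max (hsm : 0 < sm) (hRM : 0 < RM) (hσr : 0 < σr) [IsProbabilityMeasure ν0]
    (hsupp : ∀ᵐ z ∂ν0, z.2 ∈ ΘSet sm RM γM) (hmom : Integrable (fun z : ℝ × Param ↦ |z.1|) ν0)
    (hr : IsLogSolOn sm RM σx σr γM ν0 t0 I r) (hθ : θ ∈ ΘSet sm RM γM) (ht : t ∈ I)
    (htt : t0 ≤ t) :
    -r t r0 θ ≤ max (-r0) ((∫ z, |z.1| ∂ν0) + upperBarrier RM σr) := by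
  set K := (∫ z, |z.1| ∂ν0) + upperBarrier RM σr
  refine hr.neg_le_max_of_logDrift_nonneg hθ ht htt fun τ hτ hrτ ↦ ?_
  obtain ⟨hL0, hLRM⟩ := log_div_mem_Icc_of_mem_ΘSet hsm hθ
  have hK : 0 < K :=
    add_pos_of_nonneg_of_pos (integral_nonneg fun z ↦ abs_nonneg z.1) (upperBarrier_pos hRM hσr)
  have hC := hr.compR_le hsm hRM hσr hsupp hmom (hr.Icc_subset ht hτ) hτ.1 r0 θ
  have hKRM : -(K / RM) ≤ 0 := by have := div_pos hK hRM; linarith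
  have hLC : -K ≤ Real.log (θ.2.1 / sm) * (1 - compR RM σx σr ν0 r τ r0 θ) :=
    calc -K = RM * -(K / RM) := by field_simp
      _ ≤ Real.log (θ.2.1 / sm) * -(K / RM) := mul_le_mul_of_nonpos_right hLRM hKRM
      _ ≤ Real.log (θ.2.1 / sm) * (1 - compR RM σx σr ν0 r τ r0 θ) := by gcongr; linarith
  unfold logDrift
  linarith

theorem abs_le_abs_add (hsm : 0 < sm) (hRM : 0 < RM) (hσr : 0 < σr) [IsProbabilityMeasure ν0]
    (hsupp : ∀ᵐ z ∂ν0, z.2 ∈ ΘSet sm RM γM) (hmom : Integrable (fun z : ℝ × Param ↦ |z.1|) ν0)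
    (hr : IsLogSolOn sm RM σx σr γM ν0 t0 I r) (hθ : θ ∈ ΘSet sm RM γM) (ht : t ∈ I)
    (htt : t0 ≤ t) :
    |r t r0 θ| ≤ |r0| + ((∫ z, |z.1| ∂ν0) + upperBarrier RM σr) := by
  set K := (∫ z, |z.1| ∂ν0) + upperBarrier RM σr
  have hup := hr.le_max_upperBarrier (r0 := r0) hsm hRM hσr hθ ht htt
  have hlow := hr.neg_le_max (r0 := r0) hsm hRM hσr hsupp hmom hθ ht htt
  have hM : 0 ≤ ∫ z, |z.1| ∂ν0 := integral_nonneg fun z ↦ abs_nonneg z.1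
  have hV := upperBarrier_pos hRM hσr
  have h1 : max r0 (upperBarrier RM σr) ≤ |r0| + K :=
    max_le (by linarith [le_abs_self r0]) (by linarith [abs_nonneg r0])
  have h2 : max (-r0) K ≤ |r0| + K :=
    max_le (by linarith [neg_abs_le r0]) (by linarith [abs_nonneg r0])
  exact abs_le.2 ⟨by linarith, by linarith⟩

theorem abs_compR_le (hsm : 0 < sm) (hRM : 0 < RM) (hσr : 0 < σr) [IsProbabilityMeasure ν0]
    (hsupp : ∀ᵐ z ∂ν0, z.2 ∈ ΘSet sm RM γM) (hmom : Integrable (fun z : ℝ × Param ↦ |z.1|) ν0)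
    (hr : IsLogSolOn sm RM σx σr γM ν0 t0 I r) (ht : t ∈ I) (htt : t0 ≤ t) (r0 : ℝ)
    (θ : Param) :
    |compR RM σx σr ν0 r t r0 θ|
      ≤ (2 * (∫ z, |z.1| ∂ν0) + upperBarrier RM σr) / RM := by
  set K := (∫ z, |z.1| ∂ν0) + upperBarrier RM σr
  have h := abs_compR_le_integral_div (σx := σx) (σr := σr) (t := t) (r0 := r0) (θ := θ) (ρ := r)
    (φ := fun z ↦ |z.1| + K) hRM (hmom.add (integrable_const _)) (by
      filter_upwards [hsupp] with z hz
      exact hr.abs_le_abs_add hsm hRM hσr hsupp hmom hz ht htt)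
  rw [integral_add hmom (integrable_const _), integral_const, probReal_univ, one_smul] at h
  exact h.trans_eq (by ring)

theorem abs_logDrift_le (hsm : 0 < sm) (hRM : 0 < RM) (hσr : 0 < σr) [IsProbabilityMeasure ν0]
    (hsupp : ∀ᵐ z ∂ν0, z.2 ∈ ΘSet sm RM γM) (hmom : Integrable (fun z : ℝ × Param ↦ |z.1|) ν0)
    (hr : IsLogSolOn sm RM σx σr γM ν0 t0 I r) (hθ : θ ∈ ΘSet sm RM γM) (ht : t ∈ I)
    (htt : t0 ≤ t) :
    |logDrift sm RM σx σr ν0 r t r0 θ| ≤ |r0| + driftBound RM σr (∫ z, |z.1| ∂ν0) := by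
  obtain ⟨hL0, hLRM⟩ := log_div_mem_Icc_of_mem_ΘSet hsm hθ
  have hC := hr.abs_compR_le hsm hRM hσr hsupp hmom ht htt r0 θ
  rw [le_div_iff₀' hRM] at hC
  have hr_abs := hr.abs_le_abs_add (r0 := r0) hsm hRM hσr hsupp hmom hθ ht htt
  have hLC : |Real.log (θ.2.1 / sm) * (1 - compR RM σx σr ν0 r t r0 θ)|
      ≤ RM * (1 + |compR RM σx σr ν0 r t r0 θ|) := by
    rw [abs_mul, abs_of_nonneg hL0]
    exact mul_le_mul hLRM ((abs_sub _ _).trans_eq (by rw [abs_one])) (abs_nonneg _) hRM.le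
  unfold logDrift driftBound
  linarith [abs_sub (Real.log (θ.2.1 / sm) * (1 - compR RM σx σr ν0 r t r0 θ)) (r t r0 θ)]

theorem abs_sub_le (hsm : 0 < sm) (hRM : 0 < RM) (hσr : 0 < σr) [IsProbabilityMeasure ν0]
    (hsupp : ∀ᵐ z ∂ν0, z.2 ∈ ΘSet sm RM γM) (hmom : Integrable (fun z : ℝ × Param ↦ |z.1|) ν0)
    (hr : IsLogSolOn sm RM σx σr γM ν0 t0 I r) (hθ : θ ∈ ΘSet sm RM γM) (ht : t ∈ I)
    (htt : t0 ≤ t) :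
    |r t r0 θ - r0| ≤ γM * (t - t0) * (|r0| + driftBound RM σr (∫ z, |z.1| ∂ν0)) := by
  have hint : |∫ τ in t0..t, logDrift sm RM σx σr ν0 r τ r0 θ|
      ≤ (|r0| + driftBound RM σr (∫ z, |z.1| ∂ν0)) * (t - t0) := by
    have h := intervalIntegral.norm_integral_le_of_norm_le_const (a := t0) (b := t)
      (f := fun τ ↦ logDrift sm RM σx σr ν0 r τ r0 θ) fun τ hτ ↦ by
        rw [uIoc_of_le htt] at hτ
        exact hr.abs_logDrift_le hsm hRM hσr hsupp hmom hθ
          (hr.Icc_subset ht (Ioc_subset_Icc_self hτ)) hτ.1.le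
    rwa [abs_of_nonneg (sub_nonneg.2 htt)] at h
  rw [hr.eq_add_integral_logDrift ht hθ, add_sub_cancel_left, abs_mul, abs_of_nonneg hθ.2.2.1]
  calc θ.2.2 * |∫ τ in t0..t, logDrift sm RM σx σr ν0 r τ r0 θ|
      ≤ γM * ((|r0| + driftBound RM σr (∫ z, |z.1| ∂ν0)) * (t - t0)) :=
        mul_le_mul hθ.2.2.2 hint (abs_nonneg _) (hθ.2.2.1.trans hθ.2.2.2)
    _ = γM * (t - t0) * (|r0| + driftBound RM σr (∫ z, |z.1| ∂ν0)) := by ring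

theorem abs_le_exp (hsm : 0 < sm) (hRM : 0 < RM) (hσr : 0 < σr) [IsProbabilityMeasure ν0]
    (hsupp : ∀ᵐ z ∂ν0, z.2 ∈ ΘSet sm RM γM) (hmom : Integrable (fun z : ℝ × Param ↦ |z.1|) ν0)
    (hr : IsLogSolOn sm RM σx σr γM ν0 t0 I r) (hθ : θ ∈ ΘSet sm RM γM) (ht : t ∈ I)
    (htt : t0 ≤ t) :
    |r t r0 θ| ≤ (|r0| + driftBound RM σr (∫ z, |z.1| ∂ν0)) * exp (2 * γM * (t - t0))
      - driftBound RM σr (∫ z, |z.1| ∂ν0) := by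
  set R := driftBound RM σr (∫ z, |z.1| ∂ν0)
  have hR : 0 ≤ R :=
    (driftBound_pos hRM hσr (integral_nonneg fun z : ℝ × Param ↦ abs_nonneg z.1)).le
  have hγt : 0 ≤ γM * (t - t0) := mul_nonneg (hθ.2.2.1.trans hθ.2.2.2) (sub_nonneg.2 htt)
  have hsub := hr.abs_sub_le (r0 := r0) hsm hRM hσr hsupp hmom hθ ht htt
  have hexp := mul_le_mul_of_nonneg_left (add_one_le_exp (2 * γM * (t - t0)))
    (add_nonneg (abs_nonneg r0) hR)
  nlinarith [abs_sub_abs_le_abs_sub (r t r0 θ) r0, mul_nonneg hγt (add_nonneg (abs_nonneg r0) hR)]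

end IsLogSolOn

theorem stmt_10_general (sm RM σx σr γM : ℝ)
    (hsm : 0 < sm) (hRM : 0 < RM) (hσr : 0 < σr)
    (t0 : ℝ) (ν0 : Measure (ℝ × Param)) [IsProbabilityMeasure ν0]
    (hsupp : ∀ᵐ z ∂ν0, z.2 ∈ ΘSet sm RM γM)
    (hmom : Integrable (fun z : ℝ × Param => |z.1|) ν0)
    (I : Set ℝ) (r : ℝ → ℝ → Param → ℝ)
    (hr : IsLogSolOn sm RM σx σr γM ν0 t0 I r) :
    ∃ Rbar : ℝ, 0 < Rbar ∧
      ∀ t ∈ I, t0 ≤ t →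
        (∫ z, |r t z.1 z.2| ∂ν0)
          ≤ ((∫ z : ℝ × Param, |z.1| ∂ν0) + Rbar) * Real.exp (2 * γM * (t - t0)) - Rbar := by
  set M := ∫ z : ℝ × Param, |z.1| ∂ν0
  have hM : 0 ≤ M := integral_nonneg fun z ↦ abs_nonneg z.1
  refine ⟨driftBound RM σr M, driftBound_pos hRM hσr hM, fun t ht htt ↦ ?_⟩
  set R := driftBound RM σr M
  set E := exp (2 * γM * (t - t0))
  have hlin : Integrable (fun z : ℝ × Param ↦ (|z.1| + R) * E) ν0 :=
    (hmom.add (integrable_const R)).mul_const E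
  calc ∫ z, |r t z.1 z.2| ∂ν0
      ≤ ∫ z, (|z.1| + R) * E - R ∂ν0 :=
        integral_mono_of_nonneg (ae_of_all _ fun _ ↦ abs_nonneg _) (hlin.sub (integrable_const R))
          (hsupp.mono fun z hz ↦ hr.abs_le_exp hsm hRM hσr hsupp hmom hz ht htt)
    _ = (M + R) * E - R := by
        rw [integral_sub hlin (integrable_const R), integral_mul_const,
          integral_add hmom (integrable_const R), integral_const, probReal_univ, one_smul]

/-- propagation of the first moment of the initial distribution along a solution of
the log-variable integral equation. -/
theorem stmt_10 (sm RM σx σr γM : ℝ)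
    (hsm : 0 < sm) (hRM : 0 < RM) (hσx : 0 < σx) (hσr : 0 < σr) (hγM : 0 < γM)
    (t0 : ℝ) (ν0 : Measure (ℝ × Param)) [IsProbabilityMeasure ν0]
    (hsupp : ∀ᵐ z ∂ν0, z.2 ∈ ΘSet sm RM γM)
    (hmom : Integrable (fun z : ℝ × Param => |z.1|) ν0)
    (I : Set ℝ) (r : ℝ → ℝ → Param → ℝ)
    (hr : IsLogSolOn sm RM σx σr γM ν0 t0 I r) :
    ∃ Rbar : ℝ, 0 < Rbar ∧
      ∀ t ∈ I, t0 ≤ t →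
        (∫ z, |r t z.1 z.2| ∂ν0)
          ≤ ((∫ z : ℝ × Param, |z.1| ∂ν0) + Rbar) * Real.exp (2 * γM * (t - t0)) - Rbar :=
  stmt_10_general sm RM σx σr γM hsm hRM hσr t0 ν0 hsupp hmom I r hr
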